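/- The function g(θ, t) = ln(1 + 1/θ)/t is jointly convex on the domain {(θ, t) : θ > 0, t > 0}. -/

import Mathlib

/-!
Write `g(θ, t) = exp (log (log (1 + θ⁻¹)) - log t)`. The exponent is a sum of a convex function
of `θ` and the convex function `-log t`, hence jointly convex, and `exp` of a convex function is
convex. Convexity of `θ ↦ log (log (1 + θ⁻¹))` is checked on its second derivative
`((2θ + 1) L - 1) / ((θ² + θ) L)²` with `L = log (1 + θ⁻¹)`, whose numerator is nonnegative
because `L ≥ 1 / (θ + 1)`.
-/

open Real Set

section SeparableSum

variable {𝕜 E F β : Type*} [Semiring 𝕜] [PartialOrder 𝕜] [AddCommMonoid E] [AddCommMonoid F]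
  [AddCommMonoid β] [PartialOrder β] [IsOrderedAddMonoid β] [Module 𝕜 E] [Module 𝕜 F] [Module 𝕜 β]

theorem ConvexOn.prod_add {s : Set E} {t : Set F} {f : E → β} {g : F → β}
    (hf : ConvexOn 𝕜 s f) (hg : ConvexOn 𝕜 t g) :
    ConvexOn 𝕜 (s ×ˢ t) (fun p => f p.1 + g p.2) :=
  ((hf.comp_linearMap (LinearMap.fst 𝕜 E F)).subset (fun _ hp => hp.1) (hf.1.prod hg.1)).add
    ((hg.comp_linearMap (LinearMap.snd 𝕜 E F)).subset (fun _ hp => hp.2) (hf.1.prod hg.1))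

end SeparableSum

theorem ConvexOn.exp {E : Type*} [AddCommMonoid E] [Module ℝ E] {s : Set E} {f : E → ℝ}
    (hf : ConvexOn ℝ s f) : ConvexOn ℝ s (fun x => Real.exp (f x)) :=
  ⟨hf.1, fun _ hx _ hy _ _ ha hb hab =>
    (exp_le_exp.2 (hf.2 hx hy ha hb hab)).trans
      (convexOn_exp.2 (mem_univ _) (mem_univ _) ha hb hab)⟩

namespace Real

theorem hasDerivAt_log_one_add_inv {x : ℝ} (hx : x ≠ 0) (hx1 : x + 1 ≠ 0) :
    HasDerivAt (fun y => log (1 + y⁻¹)) (-(x ^ 2 + x)⁻¹) x := by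
  have h : 1 + x⁻¹ ≠ 0 := by
    rw [show 1 + x⁻¹ = (x + 1) / x by field_simp]
    exact div_ne_zero hx1 hx
  convert ((hasDerivAt_inv hx).const_add 1).log h using 1
  field_simp

theorem inv_add_one_le_log_one_add_inv {x : ℝ} (hx : 0 < x) : (x + 1)⁻¹ ≤ log (1 + x⁻¹) := by
  convert one_sub_inv_le_log_of_pos (by positivity : 0 < 1 + x⁻¹) using 1
  field_simp
  ring

theorem log_one_add_inv_pos {x : ℝ} (hx : 0 < x) : 0 < log (1 + x⁻¹) :=
  (inv_pos.2 (by linarith)).trans_le (inv_add_one_le_log_one_add_inv hx)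

theorem convexOn_log_log_one_add_inv : ConvexOn ℝ (Ioi 0) (fun x => log (log (1 + x⁻¹))) := by
  have hL : ∀ x ∈ Ioi (0 : ℝ), HasDerivAt (fun y => log (1 + y⁻¹)) (-(x ^ 2 + x)⁻¹) x :=
    fun x hx => hasDerivAt_log_one_add_inv (ne_of_gt hx) (by linarith [mem_Ioi.1 hx])
  have hf' : ∀ x ∈ Ioi (0 : ℝ), HasDerivAt (fun y => log (log (1 + y⁻¹)))
      (-((x ^ 2 + x) * log (1 + x⁻¹))⁻¹) x := by
    intro x hx
    convert (hL x hx).log (log_one_add_inv_pos hx).ne' using 1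
    field_simp
  have hf'' : ∀ x ∈ Ioi (0 : ℝ), HasDerivAt (fun y => -((y ^ 2 + y) * log (1 + y⁻¹))⁻¹)
      (((2 * x + 1) * log (1 + x⁻¹) - 1) / ((x ^ 2 + x) * log (1 + x⁻¹)) ^ 2) x := by
    intro x (hx : 0 < x)
    have hpoly : HasDerivAt (fun y : ℝ => y ^ 2 + y) (2 * x + 1) x := by
      simpa using (hasDerivAt_pow 2 x).fun_add (hasDerivAt_id' x)
    have hpos : 0 < (x ^ 2 + x) * log (1 + x⁻¹) := by
      have := log_one_add_inv_pos hx
      positivity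
    refine ((hpoly.fun_mul (hL x hx)).fun_inv hpos.ne').fun_neg.congr_deriv ?_
    field_simp
    ring
  refine convexOn_of_hasDerivWithinAt2_nonneg (convex_Ioi 0)
    (fun x hx => (hf' x hx).continuousAt.continuousWithinAt)
    (fun x hx => (hf' x (interior_subset hx)).hasDerivWithinAt)
    (fun x hx => (hf'' x (interior_subset hx)).hasDerivWithinAt) ?_
  rw [interior_Ioi]
  intro x (hx : 0 < x)
  have hnum : 1 ≤ (2 * x + 1) * log (1 + x⁻¹) :=
    calc 1 = (x + 1) * (x + 1)⁻¹ := by field_simp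
      _ ≤ (2 * x + 1) * log (1 + x⁻¹) := by
        gcongr
        · linarith
        · exact inv_add_one_le_log_one_add_inv hx
  exact div_nonneg (by linarith) (sq_nonneg _)

end Real

/-- The function `g(θ, t) = ln(1 + 1/θ)/t` is jointly convex on `{θ > 0, t > 0}`. -/
theorem stmt_6 :
    ConvexOn ℝ (Set.Ioi (0 : ℝ) ×ˢ Set.Ioi (0 : ℝ))
      (fun p : ℝ × ℝ => Real.log (1 + 1 / p.1) / p.2) := by
  refine (convexOn_log_log_one_add_inv.prod_add strictConcaveOn_log_Ioi.concaveOn.neg).exp.congr ?_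
  rintro ⟨θ, t⟩ ⟨hθ, ht : 0 < t⟩
  simp [exp_add, exp_neg, exp_log (log_one_add_inv_pos hθ), exp_log ht, div_eq_mul_inv]
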